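/- arXiv:2101.07520 — 5 statements merged into one kernel-verified Lean document; each statement's English description precedes it below -/
import Mathlib

section
/- Let f: ℝ → ℝ be defined by f(x) = x² sin(1/x) for x ≠ 0 and f(0) = 0. Then f is differentiable on ℝ, its derivative f' is discontinuous at 0, and f is not an infinitesimal similitude at x = 0. -/
open Filter Topology

def IsInfSim {X Y : Type*} [MetricSpace X] [MetricSpace Y] (f : X → Y) (x : X) (L : ℝ) : Prop :=
  ∀ u v : ℕ → X, (∀ n, u n ≠ v n) →
    Tendsto u atTop (𝓝 x) → Tendsto v atTop (𝓝 x) →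
    Tendsto (fun n => dist (f (u n)) (f (v n)) / dist (u n) (v n)) atTop (𝓝 L)

noncomputable def f3 : ℝ → ℝ := fun x => if x = 0 then 0 else x ^ 2 * Real.sin (1 / x)

lemma f3_zero : f3 0 = 0 := if_pos rfl

lemma f3_eq {x : ℝ} (hx : x ≠ 0) : f3 x = x ^ 2 * Real.sin (1 / x) := if_neg hx

lemma hasDerivAt_f3_ne {x : ℝ} (hx : x ≠ 0) :
    HasDerivAt f3 (2 * x * Real.sin (1 / x) - Real.cos (1 / x)) x := by
  have h1 : HasDerivAt (fun y : ℝ => y⁻¹) (-(x ^ 2)⁻¹) x := hasDerivAt_inv hx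
  have h2 : HasDerivAt (fun y : ℝ => Real.sin y⁻¹) (Real.cos x⁻¹ * -(x ^ 2)⁻¹) x :=
    (Real.hasDerivAt_sin x⁻¹).comp x h1
  have h3 : HasDerivAt (fun y : ℝ => y ^ 2) (2 * x) x := by
    simpa using hasDerivAt_pow 2 x
  have h5 : HasDerivAt (fun y : ℝ => y ^ 2 * Real.sin y⁻¹)
      (2 * x * Real.sin (1 / x) - Real.cos (1 / x)) x := by
    refine (h3.fun_mul h2).congr_deriv ?_
    simp only [one_div]
    field_simp
    ring
  apply h5.congr_of_eventuallyEq
  filter_upwards [isOpen_ne.mem_nhds hx] with y hy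
  rw [f3_eq hy, one_div]

lemma hasDerivAt_f3_zero : HasDerivAt f3 0 0 := by
  rw [hasDerivAt_iff_tendsto_slope]
  refine squeeze_zero_norm' ?_ ((continuous_abs.tendsto' 0 0 abs_zero).mono_left nhdsWithin_le_nhds)
  filter_upwards [self_mem_nhdsWithin] with x hx
  have hx : x ≠ 0 := hx
  rw [slope_def_field, f3_zero, f3_eq hx]
  have h : (x ^ 2 * Real.sin (1 / x) - 0) / (x - 0) = x * Real.sin (1 / x) := by
    field_simp; ring
  rw [h, Real.norm_eq_abs, abs_mul]
  exact mul_le_of_le_one_right (abs_nonneg x) (Real.abs_sin_le_one _)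

lemma diff_f3 : Differentiable ℝ f3 := by
  intro x
  rcases eq_or_ne x 0 with rfl | hx
  · exact hasDerivAt_f3_zero.differentiableAt
  · exact (hasDerivAt_f3_ne hx).differentiableAt

lemma tendsto_aux' : Tendsto (fun n : ℕ => ((n : ℝ) + 1) * (2 * Real.pi)) atTop atTop := by
  apply Tendsto.atTop_mul_const Real.two_pi_pos
  exact tendsto_natCast_atTop_atTop.atTop_add tendsto_const_nhds

lemma tendsto_aux (c : ℝ) : Tendsto (fun n : ℕ => (((n : ℝ) + 1) * (2 * Real.pi) + c)⁻¹) atTop (𝓝 0) :=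
  tendsto_inv_atTop_zero.comp (tendsto_atTop_add_const_right _ c tendsto_aux')

lemma not_cont : ¬ ContinuousAt (deriv f3) 0 := by
  intro h
  have h0 : deriv f3 0 = 0 := hasDerivAt_f3_zero.deriv
  rw [ContinuousAt, h0] at h
  set u : ℕ → ℝ := fun n => (((n : ℝ) + 1) * (2 * Real.pi))⁻¹ with hu
  have hu0 : Tendsto u atTop (𝓝 0) := tendsto_inv_atTop_zero.comp tendsto_aux'
  have hval : ∀ n, deriv f3 (u n) = -1 := by
    intro n
    have hne : u n ≠ 0 := by
      apply inv_ne_zero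
      positivity
    rw [(hasDerivAt_f3_ne hne).deriv, one_div, hu]
    simp only [inv_inv]
    have hs : Real.sin (((n : ℝ) + 1) * (2 * Real.pi)) = 0 := by
      have e : ((n : ℝ) + 1) * (2 * Real.pi) = (2 * (n + 1) : ℕ) * Real.pi := by
        push_cast; ring
      rw [e, Real.sin_nat_mul_pi]
    have hc : Real.cos (((n : ℝ) + 1) * (2 * Real.pi)) = 1 := by
      have e : ((n : ℝ) + 1) * (2 * Real.pi) = ((n + 1 : ℕ) : ℝ) * (2 * Real.pi) := by
        push_cast; ring
      rw [e, Real.cos_nat_mul_two_pi]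
    rw [hs, hc]
    ring
  have h2 : Tendsto (fun n => deriv f3 (u n)) atTop (𝓝 0) := h.comp hu0
  rw [tendsto_congr hval] at h2
  exact absurd (tendsto_nhds_unique h2 tendsto_const_nhds) (by norm_num)


lemma ratio_bound {A B : ℝ} (hA : 0 < A) (hB : 0 < B) (hBA : B - A = Real.pi)
    (hsB : Real.sin B = 1) (hsA : Real.sin A = -1) :
    2 / Real.pi ≤ dist (f3 B⁻¹) (f3 A⁻¹) / dist B⁻¹ A⁻¹ := by
  have hpi := Real.pi_pos
  have hAB : A < B := by linarith
  have hp0 : 0 < B⁻¹ := by positivity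
  have hq0 : 0 < A⁻¹ := by positivity
  have hpq : B⁻¹ < A⁻¹ := inv_strictAnti₀ hA hAB
  have hfd : dist (f3 B⁻¹) (f3 A⁻¹) = (B⁻¹) ^ 2 + (A⁻¹) ^ 2 := by
    rw [f3_eq hp0.ne', f3_eq hq0.ne', one_div, one_div, inv_inv, inv_inv,
      hsB, hsA, Real.dist_eq, mul_one, mul_neg_one, sub_neg_eq_add]
    exact abs_of_pos (by positivity)
  have hdd : dist B⁻¹ A⁻¹ = Real.pi * (B⁻¹ * A⁻¹) := by
    have hqp : A⁻¹ - B⁻¹ = (B - A) * (B⁻¹ * A⁻¹) := by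
      field_simp
    rw [Real.dist_eq, abs_of_neg (by linarith : B⁻¹ - A⁻¹ < 0), neg_sub, hqp, hBA]
  rw [hfd, hdd, div_le_div_iff₀ hpi (by positivity)]
  nlinarith [sq_nonneg (B⁻¹ - A⁻¹)]

lemma not_infsim : ¬ ∃ L : ℝ, IsInfSim f3 0 L := by
  rintro ⟨L, hL⟩
  -- Pair 1 : forces L = 0
  have tu1 : Tendsto (fun n : ℕ => ((n : ℝ) + 1)⁻¹) atTop (𝓝 0) :=
    tendsto_inv_atTop_zero.comp (tendsto_natCast_atTop_atTop.atTop_add tendsto_const_nhds)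
  have h1 := hL (fun n => ((n : ℝ) + 1)⁻¹) (fun _ => 0)
    (fun n => by positivity) tu1 tendsto_const_nhds
  have hL0 : L = 0 := by
    refine tendsto_nhds_unique h1 ?_
    refine squeeze_zero_norm' ?_ tu1
    filter_upwards with n
    set x : ℝ := ((n : ℝ) + 1)⁻¹ with hx
    have hx0 : 0 < x := by positivity
    have hd1 : dist (f3 x) (f3 0) ≤ x ^ 2 := by
      rw [f3_zero, f3_eq hx0.ne', Real.dist_eq, sub_zero, abs_mul, abs_pow,
        abs_of_pos hx0]
      exact mul_le_of_le_one_right (by positivity) (Real.abs_sin_le_one _)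
    have hd2 : dist x 0 = x := by rw [Real.dist_eq, sub_zero, abs_of_pos hx0]
    rw [Real.norm_eq_abs, abs_of_nonneg (div_nonneg dist_nonneg dist_nonneg), hd2]
    calc dist (f3 x) (f3 0) / x ≤ x ^ 2 / x := by gcongr
      _ = x := by rw [sq, mul_div_assoc, div_self hx0.ne', mul_one]
  subst hL0
  -- Pair 2 : ratio bounded below by 2/π
  set b : ℕ → ℝ := fun n => ((n : ℝ) + 1) * (2 * Real.pi) + Real.pi / 2 with hb
  set a : ℕ → ℝ := fun n => ((n : ℝ) + 1) * (2 * Real.pi) - Real.pi / 2 with ha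
  have hpi := Real.pi_pos
  have hbpos : ∀ n, 0 < b n := by
    intro n
    have : (1 : ℝ) ≤ (n : ℝ) + 1 := by
      linarith [Nat.cast_nonneg (α := ℝ) n]
    simp only [hb]; nlinarith
  have hapos : ∀ n, 0 < a n := by
    intro n
    have : (1 : ℝ) ≤ (n : ℝ) + 1 := by
      linarith [Nat.cast_nonneg (α := ℝ) n]
    simp only [ha]; nlinarith
  have hab : ∀ n, a n < b n := by
    intro n; simp only [ha, hb]; nlinarith
  have hne : ∀ n, (b n)⁻¹ ≠ (a n)⁻¹ := by
    intro n h
    exact absurd (inv_inj.mp h) (hab n).ne'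
  have tub : Tendsto (fun n => (b n)⁻¹) atTop (𝓝 0) := tendsto_aux (Real.pi / 2)
  have tua : Tendsto (fun n => (a n)⁻¹) atTop (𝓝 0) := by
    have := tendsto_aux (-(Real.pi / 2))
    simpa [ha, sub_eq_add_neg] using this
  have h2 := hL (fun n => (b n)⁻¹) (fun n => (a n)⁻¹) hne tub tua
  have hlow : ∀ n, 2 / Real.pi ≤ dist (f3 (b n)⁻¹) (f3 (a n)⁻¹) / dist (b n)⁻¹ (a n)⁻¹ := by
    intro n
    apply ratio_bound (hapos n) (hbpos n)
    · simp only [hb, ha]; ring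
    · simp only [hb]
      rw [Real.sin_add_pi_div_two]
      have e : ((n : ℝ) + 1) * (2 * Real.pi) = ((n + 1 : ℕ) : ℝ) * (2 * Real.pi) := by
        push_cast; ring
      rw [e, Real.cos_nat_mul_two_pi]
    · simp only [ha]
      rw [Real.sin_sub_pi_div_two]
      have e : ((n : ℝ) + 1) * (2 * Real.pi) = ((n + 1 : ℕ) : ℝ) * (2 * Real.pi) := by
        push_cast; ring
      rw [e, Real.cos_nat_mul_two_pi]
  have : 2 / Real.pi ≤ 0 := ge_of_tendsto' h2 hlow
  have : 0 < 2 / Real.pi := by positivity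
  linarith

theorem stmt3 :
    Differentiable ℝ f3 ∧ ¬ ContinuousAt (deriv f3) 0 ∧ ¬ ∃ L : ℝ, IsInfSim f3 0 L :=
  ⟨diff_f3, not_cont, not_infsim⟩
end

section
/- Let f: ℝ → ℝ be a differentiable function and x₀ ∈ ℝ. Then f is an infinitesimal similitude at x₀ (i.e., Df exists at x₀) if and only if the function |f'|: ℝ → ℝ is continuous at x₀. Moreover, when Df exists at x₀, then (Df)(x₀) = |f'(x₀)|. -/
/-!
The difference quotients of `f` are exactly the values `|f' c|` at mean-value points `c` between
the two arguments, which gives continuity of `|f'|` ⇒ infinitesimal similitude. Conversely, each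
`|f' y|` is a limit of difference quotients at pairs close to `(y, y)`, so if those quotients
converge to `L` at `(x₀, x₀)`, then `|f' y| → L` as `y → x₀`, and in particular `L = |f' x₀|`.
-/

open Filter Topology

theorem dist_div_dist_eq_abs_slope (f : ℝ → ℝ) (a b : ℝ) :
    dist (f a) (f b) / dist a b = |slope f a b| := by
  rw [slope_def_field, abs_div, Real.dist_eq, Real.dist_eq, abs_sub_comm (f a), abs_sub_comm a]

theorem HasDerivAt.exists_ne_dist_abs_slope_lt {f : ℝ → ℝ} {f' x ε : ℝ} (hf : HasDerivAt f f' x)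
    (hε : 0 < ε) : ∃ y ≠ x, dist y x < ε ∧ dist |slope f x y| |f'| < ε := by
  have hslope := (hasDerivAt_iff_tendsto_slope.1 hf).abs
  obtain ⟨y, ⟨hyx, hy⟩, hslope_y⟩ :=
    ((eventually_mem_nhdsWithin.and
      (eventually_nhdsWithin_of_eventually_nhds (Metric.ball_mem_nhds x hε))).and
      (hslope (Metric.ball_mem_nhds _ hε))).exists
  exact ⟨y, hyx, hy, hslope_y⟩

theorem exists_mem_uIcc_abs_deriv_eq {f : ℝ → ℝ} (hf : Differentiable ℝ f) {a b : ℝ} (hab : a ≠ b) :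
    ∃ c ∈ Set.uIcc a b, |deriv f c| = dist (f a) (f b) / dist a b := by
  wlog h : a < b generalizing a b
  · obtain ⟨c, hc, hc_eq⟩ := this hab.symm (hab.lt_or_gt.resolve_left h)
    exact ⟨c, Set.uIcc_comm a b ▸ hc, by rw [hc_eq, dist_comm (f a), dist_comm a]⟩
  obtain ⟨c, hc, hc_eq⟩ := exists_deriv_eq_slope f h hf.continuous.continuousOn hf.differentiableOn
  refine ⟨c, Set.Icc_subset_uIcc (Set.Ioo_subset_Icc_self hc), ?_⟩
  rw [hc_eq, dist_div_dist_eq_abs_slope, slope_def_field]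

namespace IsInfSim

variable {f : ℝ → ℝ} {x₀ L : ℝ}

theorem tendsto_abs_deriv (hf : Differentiable ℝ f) (hL : IsInfSim f x₀ L) {x : ℕ → ℝ}
    (hx : Tendsto x atTop (𝓝 x₀)) : Tendsto (fun n => |deriv f (x n)|) atTop (𝓝 L) := by
  have hpos (n : ℕ) : (0 : ℝ) < 1 / (n + 1) := by positivity
  choose y hy_ne hy_near hy_slope using
    fun n => (hf (x n)).hasDerivAt.exists_ne_dist_abs_slope_lt (hpos n)
  have hy : Tendsto y atTop (𝓝 x₀) := by
    have hyx : Tendsto (fun n => y n - x n) atTop (𝓝 0) :=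
      squeeze_zero_norm (fun n => (dist_eq_norm (y n) (x n) ▸ hy_near n).le)
        tendsto_one_div_add_atTop_nhds_zero_nat
    simpa using hyx.add hx
  have hratio := hL x y (fun n => (hy_ne n).symm) hx hy
  simp only [dist_div_dist_eq_abs_slope] at hratio
  exact tendsto_of_tendsto_of_dist hratio (squeeze_zero (fun n => dist_nonneg)
    (fun n => (hy_slope n).le) tendsto_one_div_add_atTop_nhds_zero_nat)

theorem eq_abs_deriv (hf : Differentiable ℝ f) (hL : IsInfSim f x₀ L) : L = |deriv f x₀| :=
  tendsto_nhds_unique (hL.tendsto_abs_deriv hf tendsto_const_nhds) tendsto_const_nhds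

theorem continuousAt_abs_deriv (hf : Differentiable ℝ f) (hL : IsInfSim f x₀ L) :
    ContinuousAt (fun x => |deriv f x|) x₀ := by
  rw [ContinuousAt, tendsto_iff_seq_tendsto, ← hL.eq_abs_deriv hf]
  exact fun x hx => hL.tendsto_abs_deriv hf hx

end IsInfSim

theorem isInfSim_of_continuousAt_abs_deriv {f : ℝ → ℝ} (hf : Differentiable ℝ f) {x₀ : ℝ}
    (hcont : ContinuousAt (fun x => |deriv f x|) x₀) : IsInfSim f x₀ |deriv f x₀| := by
  intro u v huv hu hv
  choose c hc hc_eq using fun n => exists_mem_uIcc_abs_deriv_eq hf (huv n)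
  have hmin : Tendsto (fun n => min (u n) (v n)) atTop (𝓝 x₀) := by simpa using hu.min hv
  have hmax : Tendsto (fun n => max (u n) (v n)) atTop (𝓝 x₀) := by simpa using hu.max hv
  have hc_lim : Tendsto c atTop (𝓝 x₀) :=
    tendsto_of_tendsto_of_tendsto_of_le_of_le hmin hmax (fun n => (hc n).1) (fun n => (hc n).2)
  exact (hcont.tendsto.comp hc_lim).congr hc_eq

theorem stmt4 (f : ℝ → ℝ) (hf : Differentiable ℝ f) (x₀ : ℝ) :
    ((∃ L : ℝ, IsInfSim f x₀ L) ↔ ContinuousAt (fun x => |deriv f x|) x₀) ∧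
    (∀ L : ℝ, IsInfSim f x₀ L → L = |deriv f x₀|) :=
  ⟨⟨fun ⟨_, hL⟩ => hL.continuousAt_abs_deriv hf,
      fun hcont => ⟨_, isInfSim_of_continuousAt_abs_deriv hf hcont⟩⟩,
    fun _ hL => hL.eq_abs_deriv hf⟩
end

section
/- Let X be a metric space with x₀ ∈ X a non-isolated point, and let f, g: X → ℝ be continuous infinitesimal similitudes at x₀. If the product fg is an infinitesimal similitude at x₀, then (D(fg))(x₀) ≤ |g(x₀)|·(Df)(x₀) + |f(x₀)|·(Dg)(x₀). -/
/-
Take a sequence u n → x₀ with u n ≠ x₀ (it exists because x₀ is not isolated). Writing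
(fg)(u n) - (fg)(x₀) = (f (u n) - f x₀) g (u n) + f x₀ (g (u n) - g x₀), the difference quotient of
fg at (u n, x₀) is at most |g (u n)| times that of f plus |f x₀| times that of g. Passing to the
limit gives the inequality, since g (u n) → g x₀: an infinitesimal similitude is continuous
along such sequences, its difference quotients staying bounded.
-/

open Filter Topology

theorem IsInfSim.tendsto_comp {X Y : Type*} [MetricSpace X] [MetricSpace Y] {f : X → Y} {x : X}
    {L : ℝ} (hf : IsInfSim f x L) {u : ℕ → X} (hu : Tendsto u atTop (𝓝 x))
    (hne : ∀ n, u n ≠ x) : Tendsto (f ∘ u) atTop (𝓝 (f x)) := by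
  have hquot := hf u (fun _ => x) hne hu tendsto_const_nhds
  have hdist : Tendsto (fun n => dist (u n) x) atTop (𝓝 0) := tendsto_iff_dist_tendsto_zero.1 hu
  rw [tendsto_iff_dist_tendsto_zero]
  refine (mul_zero L ▸ hquot.mul hdist).congr fun n => ?_
  exact div_mul_cancel₀ _ (dist_ne_zero.2 (hne n))

theorem abs_mul_sub_mul_le (a b a₀ b₀ : ℝ) :
    |a * b - a₀ * b₀| ≤ |b| * |a - a₀| + |a₀| * |b - b₀| :=
  calc |a * b - a₀ * b₀| = |(a - a₀) * b + a₀ * (b - b₀)| := by ring_nf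
    _ ≤ |b| * |a - a₀| + |a₀| * |b - b₀| := by
      rw [mul_comm |b|, ← abs_mul, ← abs_mul]
      exact abs_add_le _ _

theorem stmt7_general {X : Type*} [MetricSpace X] (x₀ : X) (h0 : (𝓝[≠] x₀).NeBot)
    (f g : X → ℝ) (Lf Lg L : ℝ)
    (hf : IsInfSim f x₀ Lf) (hg : IsInfSim g x₀ Lg)
    (hfg : IsInfSim (f * g) x₀ L) :
    L ≤ |g x₀| * Lf + |f x₀| * Lg := by
  obtain ⟨u, hu, hne⟩ : ∃ u : ℕ → X, Tendsto u atTop (𝓝 x₀) ∧ ∀ n, u n ≠ x₀ :=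
    exists_seq_forall_of_frequently (frequently_iff_neBot.2 h0)
  have quot {φ : X → ℝ} {Lφ : ℝ} (hφ : IsInfSim φ x₀ Lφ) :=
    hφ u (fun _ => x₀) hne hu tendsto_const_nhds
  have hbound := ((hg.tendsto_comp hu hne).abs.mul (quot hf)).add
    (tendsto_const_nhds (x := |f x₀|) |>.mul (quot hg))
  refine le_of_tendsto_of_tendsto' (quot hfg) hbound fun n => ?_
  rw [← mul_div_assoc, ← mul_div_assoc, ← add_div]
  gcongr
  exact abs_mul_sub_mul_le _ _ _ _

theorem stmt7 {X : Type*} [MetricSpace X] (x₀ : X) (h0 : (𝓝[≠] x₀).NeBot)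
    (f g : X → ℝ) (Lf Lg L : ℝ)
    (hfc : ContinuousAt f x₀) (hgc : ContinuousAt g x₀)
    (hf : IsInfSim f x₀ Lf) (hg : IsInfSim g x₀ Lg)
    (hfg : IsInfSim (f * g) x₀ L) :
    L ≤ |g x₀| * Lf + |f x₀| * Lg :=
  stmt7_general x₀ h0 f g Lf Lg L hf hg hfg
end

section
/- Let X be a compact perfect metric space and f: X → Y an infinitesimal similitude at every point of X. Then the map x ↦ (Df)(x) is continuous on X. -/
/-! At a point `x`, choose `u ≠ x` so close to `x` that the difference quotient of `f` between
`u` and `x` is within `1/(n+1)` of `(Df)(x)`; this needs `X` to be perfect. Doing so along a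
sequence `xₙ → a` produces pairs `uₙ ≠ xₙ` both converging to `a`, whose quotients tend to
`(Df)(a)` by the infinitesimal similitude property at `a`, and also lie within `1/(n+1)` of
`(Df)(xₙ)`. Hence `(Df)(xₙ) → (Df)(a)`. -/

open Filter Topology

namespace IsInfSim

variable {X Y : Type*} [MetricSpace X] [MetricSpace Y] {f : X → Y} {z : X} {L : ℝ}

theorem tendsto_nhdsNE (hf : IsInfSim f z L) :
    Tendsto (fun u => dist (f u) (f z) / dist u z) (𝓝[≠] z) (𝓝 L) := by
  refine tendsto_iff_seq_tendsto.mpr fun w hw => ?_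
  obtain ⟨N, hN⟩ := eventually_atTop.mp (hw self_mem_nhdsWithin)
  have hw' : Tendsto (fun n => w (n + N)) atTop (𝓝 z) :=
    ((tendsto_add_atTop_iff_nat N).mpr hw).mono_right nhdsWithin_le_nhds
  exact (tendsto_add_atTop_iff_nat N).mp <|
    hf _ _ (fun n => hN _ (Nat.le_add_left N n)) hw' tendsto_const_nhds

theorem exists_ne_dist_lt (hf : IsInfSim f z L) (hz : (𝓝[≠] z).NeBot) {ε δ : ℝ}
    (hε : 0 < ε) (hδ : 0 < δ) :
    ∃ u, u ≠ z ∧ dist u z < δ ∧ dist (dist (f u) (f z) / dist u z) L < ε := by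
  have hclose : ∀ᶠ u in 𝓝[≠] z, dist u z < δ :=
    mem_nhdsWithin_of_mem_nhds (Metric.ball_mem_nhds z hδ)
  have hratio := hf.tendsto_nhdsNE.eventually (Metric.ball_mem_nhds L hε)
  exact (eventually_mem_nhdsWithin.and (hclose.and hratio)).exists

end IsInfSim

theorem stmt10_general {X Y : Type*} [MetricSpace X] [MetricSpace Y]
    (hperf : ∀ x : X, (𝓝[≠] x).NeBot) (f : X → Y) (Df : X → ℝ)
    (h : ∀ x : X, IsInfSim f x (Df x)) : Continuous Df := by
  refine continuous_iff_seqContinuous.mpr fun x a hx => ?_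
  have hpos (n : ℕ) : (0 : ℝ) < 1 / (n + 1) := by positivity
  choose u hu_ne hu_close hu_ratio using fun n =>
    (h (x n)).exists_ne_dist_lt (hperf (x n)) (hpos n) (hpos n)
  have tendsto_zero_of_lt {g : ℕ → ℝ} (hg : ∀ n, g n < 1 / (n + 1)) (hg₀ : ∀ n, 0 ≤ g n) :
      Tendsto g atTop (𝓝 0) :=
    squeeze_zero hg₀ (fun n => (hg n).le) tendsto_one_div_add_atTop_nhds_zero_nat
  have hu : Tendsto u atTop (𝓝 a) :=
    hx.congr_dist <| by
      simpa only [dist_comm] using tendsto_zero_of_lt hu_close fun n => dist_nonneg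
  exact (h a u x hu_ne hu hx).congr_dist (tendsto_zero_of_lt hu_ratio fun n => dist_nonneg)

theorem stmt10 {X Y : Type*} [MetricSpace X] [CompactSpace X] [MetricSpace Y]
    (hperf : ∀ x : X, (𝓝[≠] x).NeBot) (f : X → Y) (Df : X → ℝ)
    (h : ∀ x : X, IsInfSim f x (Df x)) : Continuous Df :=
  stmt10_general hperf f Df h
end

section
/- Let X be a compact perfect metric space and f: X → X an infinitesimal similitude on X with (Df)(x) > 0 for all x ∈ X. Then for every c > 1 there exists δ > 0 such that for all x, y ∈ X with 0 < d(x,y) < δ, c⁻¹ (Df)(x) ≤ d(f(x),f(y))/d(x,y) ≤ c (Df)(x). -/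
open Filter Topology

/-! The difference quotient `distRatio f` tends to `Df x` as `(u, v) → (x, x)` off the diagonal.
As `X` is perfect, each diagonal point is a limit of off-diagonal ones, so `Df`, a limit of
`distRatio f`, is continuous, and `distRatio f p / Df p.1 → 1` off the diagonal near every
diagonal point. In a compact space every neighbourhood of the diagonal is an entourage, which
gives a uniform `δ`. -/

open Set
open scoped Uniformity

noncomputable def distRatio {X Y : Type*} [MetricSpace X] [MetricSpace Y] (f : X → Y)
    (p : X × X) : ℝ :=
  dist (f p.1) (f p.2) / dist p.1 p.2

theorem IsInfSim.tendsto_distRatio {X Y : Type*} [MetricSpace X] [MetricSpace Y]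
    {f : X → Y} {x : X} {L : ℝ} (h : IsInfSim f x L) :
    Tendsto (distRatio f) (𝓝[(diagonal X)ᶜ] (x, x)) (𝓝 L) := by
  refine tendsto_iff_seq_tendsto.2 fun p hp => ?_
  obtain ⟨hpx, hpoff⟩ := tendsto_nhdsWithin_iff.1 hp
  obtain ⟨N, hN⟩ := eventually_atTop.1 hpoff
  have hpxN : Tendsto (fun n => p (n + N)) atTop (𝓝 (x, x)) :=
    (tendsto_add_atTop_iff_nat N).2 hpx
  exact (tendsto_add_atTop_iff_nat N).1 <|
    h (fun n => (p (n + N)).1) (fun n => (p (n + N)).2) (fun n => hN _ (by omega))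
      ((continuous_fst.tendsto _).comp hpxN) ((continuous_snd.tendsto _).comp hpxN)

theorem nhdsWithin_compl_diagonal_neBot {X : Type*} [TopologicalSpace X] {x : X}
    (hx : (𝓝[≠] x).NeBot) : (𝓝[(diagonal X)ᶜ] (x, x)).NeBot := by
  have : Tendsto (fun y => (y, x)) (𝓝[≠] x) (𝓝[(diagonal X)ᶜ] (x, x)) :=
    tendsto_nhdsWithin_of_tendsto_nhds_of_eventually_within _
      ((continuous_id.prodMk continuous_const).continuousWithinAt.tendsto)
      (eventually_nhdsWithin_of_forall fun _ hy => hy)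
  exact this.neBot

theorem continuous_of_tendsto_nhdsWithin_compl_diagonal {X Y : Type*} [TopologicalSpace X]
    [TopologicalSpace Y] [T3Space Y] (hperf : ∀ x : X, (𝓝[≠] x).NeBot) {g : X × X → Y}
    {L : X → Y} (hL : ∀ x, Tendsto g (𝓝[(diagonal X)ᶜ] (x, x)) (𝓝 (L x))) : Continuous L := by
  have hclosure : diagonal X ⊆ closure (diagonal X)ᶜ := by
    rintro ⟨x, y⟩ (rfl : x = y)
    exact mem_closure_iff_nhdsWithin_neBot.2 (nhdsWithin_compl_diagonal_neBot (hperf x))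
  have hext : ContinuousOn (extendFrom (diagonal X)ᶜ g) (diagonal X) :=
    continuousOn_extendFrom hclosure <| by
      rintro ⟨x, y⟩ (rfl : x = y)
      exact ⟨L x, hL x⟩
  have hL_eq : L = extendFrom (diagonal X)ᶜ g ∘ fun x => (x, x) :=
    funext fun x => (extendFrom_eq (hclosure rfl) (hL x)).symm
  rw [hL_eq]
  exact hext.comp_continuous (continuous_id.prodMk continuous_id) fun x => rfl

theorem stmt12 {X : Type*} [MetricSpace X] [CompactSpace X]
    (hperf : ∀ x : X, (𝓝[≠] x).NeBot)
    (f : X → X) (Df : X → ℝ)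
    (h : ∀ x : X, IsInfSim f x (Df x)) (hpos : ∀ x : X, 0 < Df x) :
    ∀ c : ℝ, 1 < c → ∃ δ > 0, ∀ x y : X, 0 < dist x y → dist x y < δ →
      c⁻¹ * Df x ≤ dist (f x) (f y) / dist x y ∧
      dist (f x) (f y) / dist x y ≤ c * Df x := by
  intro c hc
  have hratio x := (h x).tendsto_distRatio
  have hDf : Continuous Df := continuous_of_tendsto_nhdsWithin_compl_diagonal hperf hratio
  have hnear : {p : X × X | p.1 ≠ p.2 → distRatio f p / Df p.1 ∈ Ioo c⁻¹ c} ∈ 𝓤 X := by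
    rw [← nhdsSet_diagonal_eq_uniformity, mem_nhdsSet_iff_forall]
    rintro ⟨x, y⟩ (rfl : x = y)
    have hG : Tendsto (fun p : X × X => distRatio f p / Df p.1)
        (𝓝[(diagonal X)ᶜ] (x, x)) (𝓝 1) := by
      have hDf_fst : Tendsto (fun p : X × X => Df p.1) (𝓝[(diagonal X)ᶜ] (x, x)) (𝓝 (Df x)) :=
        (hDf.comp continuous_fst).continuousWithinAt
      have := (hratio x).div hDf_fst (hpos x).ne'
      rwa [div_self (hpos x).ne'] at this
    exact eventually_nhdsWithin_iff.1 <| hG.eventually <|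
      Ioo_mem_nhds (inv_lt_one_of_one_lt₀ hc) hc
  obtain ⟨δ, hδ, hδnear⟩ := Metric.mem_uniformity_dist.1 hnear
  refine ⟨δ, hδ, fun x y hxy hxyδ => ?_⟩
  obtain ⟨hlow, hup⟩ := hδnear hxyδ (dist_pos.1 hxy)
  rw [lt_div_iff₀ (hpos x)] at hlow
  rw [div_lt_iff₀ (hpos x)] at hup
  exact ⟨hlow.le, hup.le⟩
end
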